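/- If λ is a p-quotient-separated partition and i ∈ ℤ/pℤ, then the partition λ^{△i} obtained from λ by adding all its addable i-nodes is also p-quotient-separated. -/

import Mathlib

/-- `f` represents a partition: weakly decreasing with finitely many nonzero parts.
`f r` is the `(r+1)`-th part (0-indexed). -/
def IsPartition (f : ℕ → ℕ) : Prop :=
  (∀ m n : ℕ, m ≤ n → f n ≤ f m) ∧ ∃ N, ∀ n, N ≤ n → f n = 0

/-- `(r, c)` (0-indexed) is a node of the Young diagram of `f`. -/
def Cell (f : ℕ → ℕ) (r c : ℕ) : Prop := c < f r

/-- The `p`-residue of the node `(r, c)`. -/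
def res (p : ℕ) (r c : ℕ) : ZMod p := (c : ZMod p) - (r : ZMod p)

/-- The ramp containing the 0-indexed node `(r, c)`; this equals `c-1+(p-1)(r-1)` in
the paper's 1-indexed convention. -/
def rampOf (p : ℕ) (r c : ℕ) : ℤ := (c : ℤ) + ((p : ℤ) - 1) * (r : ℤ)

/-- `(r, c)` is a removable node of `f`. -/
def Removable (f : ℕ → ℕ) (r c : ℕ) : Prop := c + 1 = f r ∧ f (r + 1) < f r

/-- `(r, c)` is an addable node of `f`. -/
def Addable (f : ℕ → ℕ) (r c : ℕ) : Prop := c = f r ∧ (r = 0 ∨ f r < f (r - 1))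

/-- The set of occupied positions (beads) in the abacus display of the partition `f`:
there is a bead at position `f_j − j` for each `j ≥ 1`. -/
def Occ (f : ℕ → ℕ) : Set ℤ := {x : ℤ | ∃ j : ℕ, x = (f j : ℤ) - ((j : ℤ) + 1)}

/-- `q_i(λ)`: the position of the first vacant position on runner `i` in the abacus
display of the `p`-core of `λ` (computed via the `charge` of runner `i`, which is
invariant under sliding beads up the runner). -/
noncomputable def qpos (p : ℕ) (f : ℕ → ℕ) (i : ZMod p) : ℤ :=
  (i.val : ℤ) + p *
    ((Set.ncard {x : ℤ | x ∈ Occ f ∧ (x : ZMod p) = i ∧ (i.val : ℤ) ≤ x} : ℤ) -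
     (Set.ncard {x : ℤ | x ∉ Occ f ∧ (x : ZMod p) = i ∧ x < (i.val : ℤ)} : ℤ))

/-- The first vacant position on runner `i` of the abacus display of `f`. -/
noncomputable def firstSpace (p : ℕ) (f : ℕ → ℕ) (i : ZMod p) : ℤ :=
  sInf {x : ℤ | (x : ZMod p) = i ∧ x ∉ Occ f}

/-- The last occupied position on runner `i` of the abacus display of `f`. -/
noncomputable def lastBead (p : ℕ) (f : ℕ → ℕ) (i : ZMod p) : ℤ :=
  sSup {x : ℤ | (x : ZMod p) = i ∧ x ∈ Occ f}

/-- `f` is `p`-quotient-separated: there do not exist runners `i ≠ j` such that the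
first space on runner `i` is earlier than the last bead on runner `j` and the first
space on runner `j` is earlier than the last bead on runner `i`. -/
def QSep (p : ℕ) (f : ℕ → ℕ) : Prop :=
  ¬ ∃ i j : ZMod p, i ≠ j ∧ firstSpace p f i < lastBead p f j ∧
      firstSpace p f j < lastBead p f i

/-- The position of the `(k+1)`-th lowest (i.e. latest) bead on runner `i`. -/
noncomputable def nthBead (p : ℕ) (f : ℕ → ℕ) (i : ZMod p) : ℕ → ℤ
  | 0 => sSup {x : ℤ | x ∈ Occ f ∧ (x : ZMod p) = i}
  | k + 1 => sSup {x : ℤ | x ∈ Occ f ∧ (x : ZMod p) = i ∧ x < nthBead p f i k}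

/-- The `p`-quotient component `λ^{(i)}`, as a parts function: its `(k+1)`-th part is
the number of vacant positions on runner `i` earlier than the `(k+1)`-th lowest bead
on runner `i`. -/
noncomputable def quotFn (p : ℕ) (f : ℕ → ℕ) (i : ZMod p) : ℕ → ℕ :=
  fun k => Set.ncard {x : ℤ | x ∉ Occ f ∧ (x : ZMod p) = i ∧ x < nthBead p f i k}

/-- Row `r` of `f` contains an addable node of residue `i`. -/
def AddRes (p : ℕ) (f : ℕ → ℕ) (i : ZMod p) (r : ℕ) : Prop :=
  ∃ c, Addable f r c ∧ res p r c = i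

open Classical in
/-- `λ^{△i}`: the partition obtained from `λ` by adding all its addable `i`-nodes. -/
noncomputable def addAllF (p : ℕ) (i : ZMod p) (f : ℕ → ℕ) : ℕ → ℕ :=
  fun r => f r + (if AddRes p f i r then 1 else 0)

/-!
Adding all addable `i`-nodes moves every bead on runner `i - 1` whose successor position on
runner `i` is vacant one step along.  Hence, after shifting runner `i - 1` by one, the new runner
`i` is the union and the new runner `i - 1` the intersection of the two old runners, while every
other runner is unchanged.  So the first space of the new runner `i` comes no earlier than the
first spaces of both old runners, its last bead no later than the later of their last beads, and
dually for the new runner `i - 1`.  Since a space and a bead never share a position, the shift by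
one does not affect comparisons with a third runner, and any crossing of two runners of `λ^{△i}`
is traced back to a crossing of two runners of `λ`.
-/

section Abacus

variable {p : ℕ} {f g : ℕ → ℕ}

lemma lt_of_mem_Occ (hf : IsPartition f) {x : ℤ} (hx : x ∈ Occ f) : x < f 0 := by
  obtain ⟨j, rfl⟩ := hx
  have : f j ≤ f 0 := hf.1 0 j j.zero_le
  omega

lemma exists_forall_le_mem_Occ (hf : IsPartition f) : ∃ C : ℤ, ∀ x ≤ C, x ∈ Occ f := by
  obtain ⟨N, hN⟩ := hf.2
  refine ⟨-(N + 1), fun x hx => ⟨(-x - 1).toNat, ?_⟩⟩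
  rw [hN _ (by omega)]
  omega

lemma firstSpace_le (hf : IsPartition f) {j : ZMod p} {x : ℤ} (hxj : (x : ZMod p) = j)
    (hx : x ∉ Occ f) : firstSpace p f j ≤ x := by
  obtain ⟨C, hC⟩ := exists_forall_le_mem_Occ hf
  refine csInf_le ⟨C, fun y hy => ?_⟩ ⟨hxj, hx⟩
  by_contra! hlt
  exact hy.2 (hC y hlt.le)

lemma le_lastBead (hf : IsPartition f) {j : ZMod p} {x : ℤ} (hxj : (x : ZMod p) = j)
    (hx : x ∈ Occ f) : x ≤ lastBead p f j :=
  le_csSup ⟨f 0, fun _ hy => (lt_of_mem_Occ hf hy.2).le⟩ ⟨hxj, hx⟩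

lemma firstSpace_congr {j : ZMod p} (h : ∀ x : ℤ, (x : ZMod p) = j → (x ∈ Occ f ↔ x ∈ Occ g)) :
    firstSpace p f j = firstSpace p g j := by
  unfold firstSpace
  congr 1
  exact Set.ext fun x => and_congr_right fun hx => not_congr (h x hx)

lemma lastBead_congr {j : ZMod p} (h : ∀ x : ℤ, (x : ZMod p) = j → (x ∈ Occ f ↔ x ∈ Occ g)) :
    lastBead p f j = lastBead p g j := by
  unfold lastBead
  congr 1
  exact Set.ext fun x => and_congr_right fun hx => h x hx

variable [NeZero p]

lemma exists_le_intCast_eq (j : ZMod p) (y : ℤ) : ∃ x ≤ y, (x : ZMod p) = j :=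
  ⟨y - (y - j.val) % p, sub_le_self _ (Int.emod_nonneg _ (by exact_mod_cast NeZero.ne p)),
    by simp [ZMod.intCast_mod]⟩

lemma exists_ge_intCast_eq (j : ZMod p) (y : ℤ) : ∃ x ≥ y, (x : ZMod p) = j :=
  ⟨y + (j.val - y) % p, le_add_of_nonneg_right (Int.emod_nonneg _ (by exact_mod_cast NeZero.ne p)),
    by simp [ZMod.intCast_mod]⟩

lemma firstSpace_mem (hf : IsPartition f) (j : ZMod p) :
    ((firstSpace p f j : ℤ) : ZMod p) = j ∧ firstSpace p f j ∉ Occ f := by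
  obtain ⟨C, hC⟩ := exists_forall_le_mem_Occ hf
  obtain ⟨x, hx, hxj⟩ := exists_ge_intCast_eq j (f 0 : ℤ)
  refine Int.csInf_mem (s := {x : ℤ | (x : ZMod p) = j ∧ x ∉ Occ f})
    ⟨x, hxj, fun hmem => (lt_of_mem_Occ hf hmem).not_ge hx⟩ ⟨C, fun y hy => ?_⟩
  by_contra! hlt
  exact hy.2 (hC y hlt.le)

lemma lastBead_mem (hf : IsPartition f) (j : ZMod p) :
    ((lastBead p f j : ℤ) : ZMod p) = j ∧ lastBead p f j ∈ Occ f := by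
  obtain ⟨C, hC⟩ := exists_forall_le_mem_Occ hf
  obtain ⟨x, hx, hxj⟩ := exists_le_intCast_eq j C
  exact Int.csSup_mem (s := {x : ℤ | (x : ZMod p) = j ∧ x ∈ Occ f}) ⟨x, hxj, hC x hx⟩
    ⟨f 0, fun _ hy => (lt_of_mem_Occ hf hy.2).le⟩

lemma firstSpace_ne_lastBead (hf : IsPartition f) (a b : ZMod p) :
    firstSpace p f a ≠ lastBead p f b := fun h =>
  (firstSpace_mem hf a).2 (h ▸ (lastBead_mem hf b).2)

end Abacus

section AddAll

variable {p : ℕ} {f : ℕ → ℕ} {i : ZMod p}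

def beadPos (f : ℕ → ℕ) (j : ℕ) : ℤ := (f j : ℤ) - ((j : ℤ) + 1)

lemma mem_Occ_iff {x : ℤ} : x ∈ Occ f ↔ ∃ j, beadPos f j = x :=
  exists_congr fun _ => eq_comm

lemma beadPos_mem_Occ (j : ℕ) : beadPos f j ∈ Occ f := mem_Occ_iff.2 ⟨j, rfl⟩

lemma beadPos_add_one_notMem_Occ_iff (hf : IsPartition f) (j : ℕ) :
    beadPos f j + 1 ∉ Occ f ↔ j = 0 ∨ f j < f (j - 1) := by
  rw [← not_iff_not, not_not, not_or, not_lt]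
  constructor
  · rintro ⟨k, hk⟩
    unfold beadPos at hk
    have hkj : k < j := by
      by_contra! h
      have := hf.1 j k h
      omega
    have := hf.1 k (j - 1) (by omega)
    omega
  · rintro ⟨hj, hle⟩
    refine mem_Occ_iff.2 ⟨j - 1, ?_⟩
    have := hf.1 (j - 1) j (by omega)
    unfold beadPos
    omega

lemma addRes_iff (hf : IsPartition f) (j : ℕ) :
    AddRes p f i j ↔ ((beadPos f j + 1 : ℤ) : ZMod p) = i ∧ beadPos f j + 1 ∉ Occ f := by
  have hres : ((beadPos f j + 1 : ℤ) : ZMod p) = res p j (f j) := by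
    simp only [beadPos, res]
    push_cast
    ring
  rw [beadPos_add_one_notMem_Occ_iff hf, hres, and_comm]
  simp only [AddRes, Addable]
  exact ⟨fun ⟨_, ⟨rfl, h⟩, hr⟩ => ⟨h, hr⟩, fun ⟨h, hr⟩ => ⟨_, ⟨rfl, h⟩, hr⟩⟩

open Classical in
lemma beadPos_addAllF (j : ℕ) :
    beadPos (addAllF p i f) j = beadPos f j + if AddRes p f i j then 1 else 0 := by
  unfold beadPos addAllF
  split_ifs <;> push_cast <;> ring

lemma addAllF_isPartition (hf : IsPartition f) : IsPartition (addAllF p i f) := by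
  obtain ⟨hanti, N, hN⟩ := hf
  have hrow : ∀ r, AddRes p f i (r + 1) → f (r + 1) < f r := by
    rintro r ⟨_, ⟨_, h | h⟩, _⟩
    · omega
    · simpa using h
  refine ⟨fun m n hmn => antitone_nat_of_succ_le (fun r => ?_) hmn, N + 1, fun n hn => ?_⟩
  · have := hanti r (r + 1) r.le_succ
    unfold addAllF
    by_cases hA : AddRes p f i (r + 1)
    · have := hrow r hA
      split_ifs <;> omega
    · split_ifs <;> omega
  · have hfn : f n = 0 := hN n (by omega)
    have hn' : ¬ AddRes p f i n := by
      obtain ⟨n, rfl⟩ : ∃ r, n = r + 1 := ⟨n - 1, by omega⟩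
      exact fun h => (hrow n h).ne' (by rw [hfn, hN n (by omega)])
    simp [addAllF, hfn, hn']

lemma mem_Occ_addAllF_iff (hf : IsPartition f) (x : ℤ) :
    x ∈ Occ (addAllF p i f) ↔
      (x ∈ Occ f ∧ ¬(((x + 1 : ℤ) : ZMod p) = i ∧ x + 1 ∉ Occ f)) ∨
      (x ∉ Occ f ∧ (x : ZMod p) = i ∧ x - 1 ∈ Occ f) := by
  constructor
  · rw [mem_Occ_iff]
    rintro ⟨j, rfl⟩
    rw [beadPos_addAllF]
    by_cases hA : AddRes p f i j
    · rw [if_pos hA, add_sub_cancel_right, addRes_iff hf] at *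
      exact Or.inr ⟨hA.2, hA.1, beadPos_mem_Occ j⟩
    · rw [if_neg hA, add_zero]
      rw [addRes_iff hf] at hA
      exact Or.inl ⟨beadPos_mem_Occ j, hA⟩
  · rintro (⟨hx, hA⟩ | ⟨hx, hxi, hx'⟩)
    · obtain ⟨j, rfl⟩ := mem_Occ_iff.1 hx
      rw [← addRes_iff hf] at hA
      exact mem_Occ_iff.2 ⟨j, by rw [beadPos_addAllF, if_neg hA, add_zero]⟩
    · obtain ⟨j, hj⟩ := mem_Occ_iff.1 hx'
      have hA : AddRes p f i j := by
        rw [addRes_iff hf, hj, sub_add_cancel]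
        exact ⟨hxi, hx⟩
      exact mem_Occ_iff.2 ⟨j, by rw [beadPos_addAllF, if_pos hA, hj, sub_add_cancel]⟩

lemma mem_Occ_addAllF_of_ne (hf : IsPartition f) {x : ℤ} (hi : (x : ZMod p) ≠ i)
    (hi' : (x : ZMod p) ≠ i - 1) : x ∈ Occ (addAllF p i f) ↔ x ∈ Occ f := by
  have : ((x + 1 : ℤ) : ZMod p) ≠ i := by
    push_cast
    exact fun h => hi' (eq_sub_of_add_eq h)
  simp only [mem_Occ_addAllF_iff hf, this, hi, false_and, and_false, not_false_eq_true,
    and_true, or_false]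

lemma firstSpace_addAllF_of_ne (hf : IsPartition f) {c : ZMod p} (hi : c ≠ i) (hi' : c ≠ i - 1) :
    firstSpace p (addAllF p i f) c = firstSpace p f c :=
  firstSpace_congr fun _ hx => mem_Occ_addAllF_of_ne hf (hx ▸ hi) (hx ▸ hi')

lemma lastBead_addAllF_of_ne (hf : IsPartition f) {c : ZMod p} (hi : c ≠ i) (hi' : c ≠ i - 1) :
    lastBead p (addAllF p i f) c = lastBead p f c :=
  lastBead_congr fun _ hx => mem_Occ_addAllF_of_ne hf (hx ▸ hi) (hx ▸ hi')

variable [Fact (1 < p)]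

lemma mem_Occ_addAllF_of_eq (hf : IsPartition f) {x : ℤ} (hx : (x : ZMod p) = i) :
    x ∈ Occ (addAllF p i f) ↔ x ∈ Occ f ∨ x - 1 ∈ Occ f := by
  have : ((x + 1 : ℤ) : ZMod p) ≠ i := by
    push_cast
    simp [hx]
  simp only [mem_Occ_addAllF_iff hf, this, hx, false_and, not_false_eq_true, and_true, true_and]
  tauto

lemma mem_Occ_addAllF_of_eq_sub_one (hf : IsPartition f) {x : ℤ} (hx : (x : ZMod p) = i - 1) :
    x ∈ Occ (addAllF p i f) ↔ x ∈ Occ f ∧ x + 1 ∈ Occ f := by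
  have h1 : ((x + 1 : ℤ) : ZMod p) = i := by
    push_cast
    rw [hx, sub_add_cancel]
  have h2 : (x : ZMod p) ≠ i := by
    simp [hx]
  simp only [mem_Occ_addAllF_iff hf, h1, h2, true_and, not_not, false_and, and_false, or_false]

lemma firstSpace_le_firstSpace_addAllF (hf : IsPartition f) :
    firstSpace p f i ≤ firstSpace p (addAllF p i f) i := by
  obtain ⟨hres, hvac⟩ := firstSpace_mem (addAllF_isPartition hf) i
  rw [mem_Occ_addAllF_of_eq hf hres, not_or] at hvac
  exact firstSpace_le hf hres hvac.1

lemma firstSpace_sub_one_lt_firstSpace_addAllF (hf : IsPartition f) :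
    firstSpace p f (i - 1) < firstSpace p (addAllF p i f) i := by
  obtain ⟨hres, hvac⟩ := firstSpace_mem (addAllF_isPartition hf) i
  rw [mem_Occ_addAllF_of_eq hf hres, not_or] at hvac
  have := firstSpace_le hf (j := i - 1) (by push_cast; rw [hres]) hvac.2
  omega

lemma lastBead_addAllF_le (hf : IsPartition f) :
    lastBead p (addAllF p i f) i ≤ max (lastBead p f i) (lastBead p f (i - 1) + 1) := by
  obtain ⟨hres, hbead⟩ := lastBead_mem (addAllF_isPartition hf) i
  rcases (mem_Occ_addAllF_of_eq hf hres).1 hbead with h | h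
  · exact le_max_of_le_left (le_lastBead hf hres h)
  · have := le_lastBead hf (j := i - 1) (by push_cast; rw [hres]) h
    exact le_max_of_le_right (by omega)

lemma lastBead_addAllF_sub_one_le (hf : IsPartition f) :
    lastBead p (addAllF p i f) (i - 1) ≤ lastBead p f (i - 1) := by
  obtain ⟨hres, hbead⟩ := lastBead_mem (addAllF_isPartition hf) (i - 1)
  exact le_lastBead hf hres ((mem_Occ_addAllF_of_eq_sub_one hf hres).1 hbead).1

lemma lastBead_addAllF_sub_one_lt (hf : IsPartition f) :
    lastBead p (addAllF p i f) (i - 1) < lastBead p f i := by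
  obtain ⟨hres, hbead⟩ := lastBead_mem (addAllF_isPartition hf) (i - 1)
  have := le_lastBead hf (j := i) (by push_cast; rw [hres, sub_add_cancel])
    ((mem_Occ_addAllF_of_eq_sub_one hf hres).1 hbead).2
  omega

lemma min_le_firstSpace_addAllF_sub_one (hf : IsPartition f) :
    min (firstSpace p f (i - 1)) (firstSpace p f i - 1) ≤ firstSpace p (addAllF p i f) (i - 1) := by
  obtain ⟨hres, hvac⟩ := firstSpace_mem (addAllF_isPartition hf) (i - 1)
  rcases not_and_or.1 ((mem_Occ_addAllF_of_eq_sub_one hf hres).not.1 hvac) with h | h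
  · exact min_le_of_left_le (firstSpace_le hf hres h)
  · have := firstSpace_le hf (j := i) (by push_cast; rw [hres, sub_add_cancel]) h
    exact min_le_of_right_le (by omega)

end AddAll

def Crossing (p : ℕ) (f : ℕ → ℕ) (a b : ZMod p) : Prop :=
  firstSpace p f a < lastBead p f b ∧ firstSpace p f b < lastBead p f a

section Crossing

variable {p : ℕ} [Fact (1 < p)] {f : ℕ → ℕ} {i c : ZMod p}

lemma crossing_self_sub_one_of_firstSpace_addAllF_lt (hf : IsPartition f)
    (h : firstSpace p (addAllF p i f) i < lastBead p (addAllF p i f) (i - 1)) :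
    Crossing p f i (i - 1) :=
  ⟨(firstSpace_le_firstSpace_addAllF hf).trans_lt (h.trans_le (lastBead_addAllF_sub_one_le hf)),
    (firstSpace_sub_one_lt_firstSpace_addAllF hf).trans (h.trans (lastBead_addAllF_sub_one_lt hf))⟩

lemma exists_crossing_of_crossing_addAllF_self (hf : IsPartition f) (hc : c ≠ i)
    (hc' : c ≠ i - 1) (h : Crossing p (addAllF p i f) i c) : ∃ b ≠ c, Crossing p f b c := by
  obtain ⟨h₁, h₂⟩ := h
  rw [lastBead_addAllF_of_ne hf hc hc'] at h₁
  rw [firstSpace_addAllF_of_ne hf hc hc'] at h₂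
  rcases lt_max_iff.1 (h₂.trans_le (lastBead_addAllF_le hf)) with h₃ | h₃
  · exact ⟨i, hc.symm, (firstSpace_le_firstSpace_addAllF hf).trans_lt h₁, h₃⟩
  · have := firstSpace_ne_lastBead hf c (i - 1)
    exact ⟨i - 1, hc'.symm, (firstSpace_sub_one_lt_firstSpace_addAllF hf).trans h₁, by omega⟩

lemma exists_crossing_of_crossing_addAllF_sub_one (hf : IsPartition f) (hc : c ≠ i)
    (hc' : c ≠ i - 1) (h : Crossing p (addAllF p i f) (i - 1) c) : ∃ b ≠ c, Crossing p f b c := by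
  obtain ⟨h₁, h₂⟩ := h
  rw [lastBead_addAllF_of_ne hf hc hc'] at h₁
  rw [firstSpace_addAllF_of_ne hf hc hc'] at h₂
  rcases min_lt_iff.1 ((min_le_firstSpace_addAllF_sub_one hf).trans_lt h₁) with h₃ | h₃
  · exact ⟨i - 1, hc'.symm, h₃, h₂.trans_le (lastBead_addAllF_sub_one_le hf)⟩
  · have := firstSpace_ne_lastBead hf i c
    exact ⟨i, hc.symm, by omega, h₂.trans (lastBead_addAllF_sub_one_lt hf)⟩

lemma exists_crossing_of_crossing_addAllF (hf : IsPartition f) {a : ZMod p} (hac : a ≠ c)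
    (hc : c ≠ i) (hc' : c ≠ i - 1) (h : Crossing p (addAllF p i f) a c) :
    ∃ b ≠ c, Crossing p f b c := by
  by_cases ha : a = i
  · exact exists_crossing_of_crossing_addAllF_self hf hc hc' (ha ▸ h)
  by_cases ha' : a = i - 1
  · exact exists_crossing_of_crossing_addAllF_sub_one hf hc hc' (ha' ▸ h)
  refine ⟨a, hac, ?_⟩
  rwa [Crossing, firstSpace_addAllF_of_ne hf ha ha', firstSpace_addAllF_of_ne hf hc hc',
    lastBead_addAllF_of_ne hf ha ha', lastBead_addAllF_of_ne hf hc hc'] at h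

end Crossing

/-- If `λ` is `p`-quotient-separated then so is the partition `λ^{△i}` obtained by
adding all the addable `i`-nodes of `λ`. -/
theorem stmt11 (p : ℕ) (hp : 2 ≤ p) (f : ℕ → ℕ) (hf : IsPartition f) (i : ZMod p)
    (hqs : QSep p f) : QSep p (addAllF p i f) := by
  have : Fact (1 < p) := ⟨hp⟩
  rintro ⟨a, b, hab, hcross⟩
  by_cases hb : b ≠ i ∧ b ≠ i - 1
  · obtain ⟨a', ha', h⟩ := exists_crossing_of_crossing_addAllF hf hab hb.1 hb.2 hcross
    exact hqs ⟨a', b, ha', h⟩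
  by_cases ha : a ≠ i ∧ a ≠ i - 1
  · obtain ⟨b', hb', h⟩ := exists_crossing_of_crossing_addAllF hf hab.symm ha.1 ha.2 hcross.symm
    exact hqs ⟨b', a, hb', h⟩
  simp only [not_and_or, not_not] at ha hb
  rcases ha with rfl | rfl <;> rcases hb with rfl | rfl
  · exact absurd rfl hab
  · exact hqs ⟨_, _, hab, crossing_self_sub_one_of_firstSpace_addAllF_lt hf hcross.1⟩
  · exact hqs ⟨_, _, hab.symm, crossing_self_sub_one_of_firstSpace_addAllF_lt hf hcross.2⟩
  · exact absurd rfl hab
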